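/- arXiv:2204.12488 — 2 statements merged into one kernel-verified Lean document; each statement's English description precedes it below -/
import Mathlib

section
/- Let Z₁,…,Zₙ be i.i.d. random variables each following the Laplace distribution Lap(b) with mean 0 and scale b > 0, and let Z = Z₁ + ⋯ + Zₙ. Then for all 0 < t < 2√2·b·n, Pr[|Z| > t] ≤ 2·exp(−t²/(8nb²)). -/
/-!
The Laplace law has moment generating function `(1 - l²b²)⁻¹` for `|l| < 1/b`, and
`(1 - u)⁻¹ ≤ exp (2u)` for `0 ≤ u ≤ 1/2`; so on `l²b² ≤ 1/2` each summand is sub-Gaussian with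
variance proxy `4b²`, and by independence the sum has `mgf ≤ exp (2 n l² b²)`. A Chernoff bound in
both tails with the optimal parameter `l = t / (4nb²)`, which is admissible exactly when
`t ≤ 2√2·b·n`, gives `2 exp (-t² / (8nb²))`.
-/

open MeasureTheory ProbabilityTheory

/-- The Laplace distribution with scale `b`: the measure on `ℝ` with density
`x ↦ (1/(2b)) · exp(-|x|/b)` with respect to Lebesgue measure. -/
noncomputable def lap (b : ℝ) : Measure ℝ :=
  volume.withDensity (fun x => ENNReal.ofReal ((1 / (2 * b)) * Real.exp (-|x| / b)))

open Real Set

noncomputable def lapPDFReal (b x : ℝ) : ℝ := 1 / (2 * b) * exp (-|x| / b)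

lemma lap_eq_withDensity (b : ℝ) :
    lap b = volume.withDensity (fun x => ENNReal.ofReal (lapPDFReal b x)) := rfl

section LaplaceMGF

variable {b l : ℝ}

lemma lapPDFReal_nonneg (hb : 0 ≤ b) (x : ℝ) : 0 ≤ lapPDFReal b x := by
  unfold lapPDFReal; positivity

lemma measurable_lapPDFReal (b : ℝ) : Measurable (lapPDFReal b) := by
  unfold lapPDFReal; fun_prop

lemma lapPDFReal_mul_exp_eqOn_Ioi (b l : ℝ) :
    EqOn (fun x => lapPDFReal b x * exp (l * x)) (fun x => 1 / (2 * b) * exp ((l - b⁻¹) * x))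
      (Ioi 0) := by
  intro x hx
  simp only [lapPDFReal, abs_of_pos (mem_Ioi.mp hx), mul_assoc, ← exp_add]
  ring_nf

lemma lapPDFReal_mul_exp_eqOn_Iic (b l : ℝ) :
    EqOn (fun x => lapPDFReal b x * exp (l * x)) (fun x => 1 / (2 * b) * exp ((l + b⁻¹) * x))
      (Iic 0) := by
  intro x hx
  simp only [lapPDFReal, abs_of_nonpos (mem_Iic.mp hx), mul_assoc, ← exp_add]
  ring_nf

lemma integrable_lapPDFReal_mul_exp (hl : |l| < b⁻¹) :
    Integrable (fun x => lapPDFReal b x * exp (l * x)) := by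
  have hIoi : IntegrableOn (fun x => lapPDFReal b x * exp (l * x)) (Ioi 0) :=
    IntegrableOn.congr_fun ((integrableOn_exp_mul_Ioi (by linarith [le_abs_self l]) 0).const_mul _)
      (lapPDFReal_mul_exp_eqOn_Ioi b l).symm measurableSet_Ioi
  have hIic : IntegrableOn (fun x => lapPDFReal b x * exp (l * x)) (Iic 0) :=
    IntegrableOn.congr_fun ((integrableOn_exp_mul_Iic (by linarith [neg_abs_le l]) 0).const_mul _)
      (lapPDFReal_mul_exp_eqOn_Iic b l).symm measurableSet_Iic
  simpa using hIic.union hIoi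

lemma integral_lapPDFReal_mul_exp (hl : |l| < b⁻¹) :
    ∫ x, lapPDFReal b x * exp (l * x) = (1 - l ^ 2 * b ^ 2)⁻¹ := by
  have hl₁ : l - b⁻¹ < 0 := by linarith [le_abs_self l]
  have hl₂ : 0 < l + b⁻¹ := by linarith [neg_abs_le l]
  have hb : 0 < b := inv_pos.mp ((abs_nonneg l).trans_lt hl)
  have hint := integrable_lapPDFReal_mul_exp hl
  rw [← intervalIntegral.integral_Iic_add_Ioi hint.integrableOn hint.integrableOn,
    setIntegral_congr_fun measurableSet_Iic (lapPDFReal_mul_exp_eqOn_Iic b l),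
    setIntegral_congr_fun measurableSet_Ioi (lapPDFReal_mul_exp_eqOn_Ioi b l),
    integral_const_mul, integral_const_mul, integral_exp_mul_Iic hl₂, integral_exp_mul_Ioi hl₁]
  simp only [mul_zero, exp_zero]
  have h₁ : b * l - 1 ≠ 0 := by
    have := mul_lt_mul_of_pos_left hl₁ hb; field_simp at this; linarith
  have h₂ : b * l + 1 ≠ 0 := by
    have := mul_lt_mul_of_pos_left hl₂ hb; field_simp at this; linarith
  rw [show 1 - l ^ 2 * b ^ 2 = -((b * l - 1) * (b * l + 1)) by ring]
  field_simp
  ring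

lemma integrable_exp_mul_lap (hl : |l| < b⁻¹) : Integrable (fun x => exp (l * x)) (lap b) := by
  have hb : 0 ≤ b := (inv_pos.mp ((abs_nonneg l).trans_lt hl)).le
  rw [lap_eq_withDensity, integrable_withDensity_iff_integrable_smul'
    (measurable_lapPDFReal b).ennreal_ofReal (ae_of_all _ fun _ => ENNReal.ofReal_lt_top)]
  simpa only [ENNReal.toReal_ofReal (lapPDFReal_nonneg hb _), smul_eq_mul]
    using integrable_lapPDFReal_mul_exp hl

lemma mgf_id_lap (hl : |l| < b⁻¹) : mgf id (lap b) l = (1 - l ^ 2 * b ^ 2)⁻¹ := by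
  have hb : 0 ≤ b := (inv_pos.mp ((abs_nonneg l).trans_lt hl)).le
  rw [mgf, lap_eq_withDensity, integral_withDensity_eq_integral_toReal_smul
    (measurable_lapPDFReal b).ennreal_ofReal (ae_of_all _ fun _ => ENNReal.ofReal_lt_top)]
  simpa only [ENNReal.toReal_ofReal (lapPDFReal_nonneg hb _), smul_eq_mul, id]
    using integral_lapPDFReal_mul_exp hl

end LaplaceMGF

lemma inv_one_sub_le_exp_two_mul {u : ℝ} (h₀ : 0 ≤ u) (h₁ : u ≤ 1 / 2) :
    (1 - u)⁻¹ ≤ exp (2 * u) := by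
  rw [inv_le_iff_one_le_mul₀' (by linarith)]
  nlinarith [add_one_le_exp (2 * u)]

section LaplaceVariables

variable {Ω : Type*} [MeasurableSpace Ω] {μ : Measure Ω} {X : Ω → ℝ} {b l : ℝ}

lemma integrable_exp_mul_of_map_eq_lap (hX : AEMeasurable X μ) (hlaw : μ.map X = lap b)
    (hl : |l| < b⁻¹) : Integrable (fun ω => exp (l * X ω)) μ := by
  have h := integrable_exp_mul_lap hl
  rw [← hlaw] at h
  exact (integrable_map_measure (measurable_const_mul l).exp.aestronglyMeasurable hX).mp h

lemma mgf_of_map_eq_lap (hX : AEMeasurable X μ) (hlaw : μ.map X = lap b) (hl : |l| < b⁻¹) :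
    mgf X μ l = (1 - l ^ 2 * b ^ 2)⁻¹ := by
  rw [← mgf_id_map hX, hlaw, mgf_id_lap hl]

lemma abs_lt_inv_of_sq_mul_sq_le_half (hb : 0 < b) (hl : l ^ 2 * b ^ 2 ≤ 1 / 2) : |l| < b⁻¹ := by
  rw [← one_div, lt_div_iff₀ hb]
  nlinarith [abs_nonneg l, sq_abs l]

lemma mgf_le_of_map_eq_lap (hX : AEMeasurable X μ) (hlaw : μ.map X = lap b) (hb : 0 < b)
    (hl : l ^ 2 * b ^ 2 ≤ 1 / 2) : mgf X μ l ≤ exp (2 * (l ^ 2 * b ^ 2)) := by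
  rw [mgf_of_map_eq_lap hX hlaw (abs_lt_inv_of_sq_mul_sq_le_half hb hl)]
  exact inv_one_sub_le_exp_two_mul (by positivity) hl

end LaplaceVariables

section Chernoff

variable {Ω : Type*} [MeasurableSpace Ω] {μ : Measure Ω} {X : Ω → ℝ} {l t K : ℝ}

lemma measure_lt_abs_le_of_mgf_le [IsFiniteMeasure μ] (hl : 0 ≤ l)
    (hint : Integrable (fun ω => exp (l * X ω)) μ) (hint' : Integrable (fun ω => exp (-l * X ω)) μ)
    (hK : mgf X μ l ≤ K) (hK' : mgf X μ (-l) ≤ K) :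
    μ {ω | t < |X ω|} ≤ ENNReal.ofReal (2 * (exp (-l * t) * K)) := by
  have hK₀ : 0 ≤ exp (-l * t) * K := mul_nonneg (exp_pos _).le (mgf_nonneg.trans hK)
  have upper : μ.real {ω | t ≤ X ω} ≤ exp (-l * t) * K :=
    (measure_ge_le_exp_mul_mgf t hl hint).trans (by gcongr)
  have lower : μ.real {ω | X ω ≤ -t} ≤ exp (-l * t) * K := by
    have h := measure_le_le_exp_mul_mgf (-t) (neg_nonpos.mpr hl) hint'
    rw [neg_mul_neg] at h
    exact h.trans (by gcongr)
  have hsub : {ω | t < |X ω|} ⊆ {ω | t ≤ X ω} ∪ {ω | X ω ≤ -t} := by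
    intro ω (hω : t < |X ω|)
    rcases lt_abs.mp hω with h | h
    · exact Or.inl h.le
    · exact Or.inr (show X ω ≤ -t by linarith)
  calc μ {ω | t < |X ω|} ≤ μ {ω | t ≤ X ω} + μ {ω | X ω ≤ -t} :=
        (measure_mono hsub).trans (measure_union_le _ _)
    _ = ENNReal.ofReal (μ.real {ω | t ≤ X ω}) + ENNReal.ofReal (μ.real {ω | X ω ≤ -t}) := by
        rw [ofReal_measureReal, ofReal_measureReal]
    _ ≤ ENNReal.ofReal (exp (-l * t) * K) + ENNReal.ofReal (exp (-l * t) * K) := by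
        gcongr
    _ = ENNReal.ofReal (2 * (exp (-l * t) * K)) := by
        rw [← ENNReal.ofReal_add hK₀ hK₀, two_mul]

end Chernoff

section SumOfLaplace

variable {Ω ι : Type*} [MeasurableSpace Ω] {μ : Measure Ω} {Z : ι → Ω → ℝ} {b l : ℝ}

lemma integrable_exp_mul_sum_of_map_eq_lap [Fintype ι] (hindep : iIndepFun Z μ)
    (hmeas : ∀ i, Measurable (Z i)) (hlaw : ∀ i, μ.map (Z i) = lap b) (hl : |l| < b⁻¹) :
    Integrable (fun ω => exp (l * (∑ i, Z i) ω)) μ :=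
  have := hindep.isProbabilityMeasure
  hindep.integrable_exp_mul_sum hmeas fun i _ =>
    integrable_exp_mul_of_map_eq_lap (hmeas i).aemeasurable (hlaw i) hl

lemma mgf_sum_le_of_map_eq_lap [Fintype ι] (hindep : iIndepFun Z μ)
    (hmeas : ∀ i, Measurable (Z i)) (hlaw : ∀ i, μ.map (Z i) = lap b) (hb : 0 < b)
    (hl : l ^ 2 * b ^ 2 ≤ 1 / 2) :
    mgf (∑ i, Z i) μ l ≤ exp (2 * Fintype.card ι * (l ^ 2 * b ^ 2)) := by
  rw [hindep.mgf_sum hmeas]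
  calc ∏ i, mgf (Z i) μ l ≤ ∏ _i : ι, exp (2 * (l ^ 2 * b ^ 2)) :=
        Finset.prod_le_prod (fun _ _ => mgf_nonneg)
          fun i _ => mgf_le_of_map_eq_lap (hmeas i).aemeasurable (hlaw i) hb hl
    _ = exp (2 * Fintype.card ι * (l ^ 2 * b ^ 2)) := by
        rw [Finset.prod_const, ← exp_nat_mul, Finset.card_univ]
        ring_nf

end SumOfLaplace

/-- **Concentration of sums of i.i.d. Laplace random variables.** If `Z₁, …, Zₙ` are i.i.d.
`Lap(b)` random variables with sum `Z`, then for all `0 < t < 2√2·b·n`,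
`Pr[|Z| > t] ≤ 2·exp(-t²/(8nb²))`. -/
theorem laplace_sum_concentration {Ω : Type*} [MeasurableSpace Ω]
    (μ : Measure Ω) [IsProbabilityMeasure μ] (n : ℕ) (b : ℝ) (hb : 0 < b)
    (Z : Fin n → Ω → ℝ) (hmeas : ∀ i, Measurable (Z i))
    (hindep : iIndepFun Z μ)
    (hlaw : ∀ i, μ.map (Z i) = lap b)
    (t : ℝ) (ht0 : 0 < t) (ht1 : t < 2 * Real.sqrt 2 * b * n) :
    μ {ω | t < |∑ i, Z i ω|} ≤ ENNReal.ofReal (2 * Real.exp (-(t ^ 2) / (8 * n * b ^ 2))) := by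
  have hn : (0 : ℝ) < n := by
    rcases n.eq_zero_or_pos with rfl | hn
    · simp only [CharP.cast_eq_zero, mul_zero] at ht1; linarith
    · exact_mod_cast hn
  have ht2 : t ^ 2 < 8 * n ^ 2 * b ^ 2 := by
    nlinarith [sq_sqrt (show (0 : ℝ) ≤ 2 by norm_num), sqrt_nonneg 2]
  set l := t / (4 * n * b ^ 2) with hl_def
  have hl : 0 ≤ l := by positivity
  have hlb : l ^ 2 * b ^ 2 ≤ 1 / 2 := by
    rw [hl_def, div_pow, div_mul_eq_mul_div, div_le_iff₀ (by positivity)]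
    nlinarith
  have hlb' : (-l) ^ 2 * b ^ 2 ≤ 1 / 2 := by rwa [neg_sq]
  have hexp : exp (-l * t) * exp (2 * Fintype.card (Fin n) * (l ^ 2 * b ^ 2)) =
      exp (-(t ^ 2) / (8 * n * b ^ 2)) := by
    rw [← exp_add, Fintype.card_fin, hl_def]
    congr 1
    field_simp
    ring
  calc μ {ω | t < |∑ i, Z i ω|} = μ {ω | t < |(∑ i, Z i) ω|} := by simp only [Finset.sum_apply]
    _ ≤ _ := measure_lt_abs_le_of_mgf_le hl
        (integrable_exp_mul_sum_of_map_eq_lap hindep hmeas hlaw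
          (abs_lt_inv_of_sq_mul_sq_le_half hb hlb))
        (integrable_exp_mul_sum_of_map_eq_lap hindep hmeas hlaw
          (abs_lt_inv_of_sq_mul_sq_le_half hb hlb'))
        (mgf_sum_le_of_map_eq_lap hindep hmeas hlaw hb hlb)
        ((mgf_sum_le_of_map_eq_lap hindep hmeas hlaw hb hlb').trans_eq (by rw [neg_sq]))
    _ = _ := by rw [hexp]
end

section
/- Any rooted tree with V ≥ 2 vertices admits a decomposition into edge-disjoint paths (heavy paths) such that the 'path tree' obtained by contracting each heavy path to a single node has height at most log₂(V). -/
open Finset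

attribute [local instance] Classical.propDecidable

/-- A rooted tree on `n` vertices, given by a parent function: the root is a fixed point
of `parent`, and every vertex reaches the root by iterating `parent`. -/
structure ParentTree (n : ℕ) where
  parent : Fin n → Fin n
  root : Fin n
  root_fixed : parent root = root
  reaches_root : ∀ v, ∃ k, parent^[k] v = root

namespace ParentTree

variable {n : ℕ}

/-- The depth of `v`, i.e. the number of edges on the path from `v` to the root. -/
noncomputable def depthToRoot (T : ParentTree n) (v : Fin n) : ℕ :=
  Nat.find (T.reaches_root v)

/-- The set of descendants of `v` (including `v` itself). -/
noncomputable def descFinset (T : ParentTree n) (v : Fin n) : Finset (Fin n) :=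
  Finset.univ.filter (fun u => ∃ k ∈ Finset.range (n + 1), T.parent^[k] u = v)

/-- The depth of the subtree rooted at `v`: the largest number of edges from `v` down to
one of its descendants. -/
noncomputable def subtreeDepth (T : ParentTree n) (v : Fin n) : ℕ :=
  (T.descFinset v).sup (fun u => T.depthToRoot u - T.depthToRoot v)

/-- `u` is a child of `v`. -/
def IsChild (T : ParentTree n) (u v : Fin n) : Prop := u ≠ v ∧ T.parent u = v

/-- `heavy` is a heavy-child selection: every non-leaf vertex `v` selects (the edge to) a
child `heavy v` whose subtree has the largest depth among the children of `v`. -/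
def HeavyWF (T : ParentTree n) (heavy : Fin n → Fin n) : Prop :=
  ∀ v, (∃ u, T.IsChild u v) →
    T.IsChild (heavy v) v ∧ ∀ u, T.IsChild u v → T.subtreeDepth u ≤ T.subtreeDepth (heavy v)

/-- The edge from `u` to its parent (identified with its lower endpoint `u`) is a heavy
(selected) edge. -/
def HeavyEdge (T : ParentTree n) (heavy : Fin n → Fin n) (u : Fin n) : Prop :=
  u ≠ T.root ∧ heavy (T.parent u) = u

end ParentTree

namespace ParentTree

variable {n : ℕ}

/-- `heavy` is a size-based heavy-child selection: every non-leaf vertex `v` selects the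
edge to a child `heavy v` whose subtree contains the most vertices among the children
of `v`. -/
def HeavyWFSize (T : ParentTree n) (heavy : Fin n → Fin n) : Prop :=
  ∀ v, (∃ u, T.IsChild u v) →
    T.IsChild (heavy v) v ∧
      ∀ u, T.IsChild u v → (T.descFinset u).card ≤ (T.descFinset (heavy v)).card

end ParentTree
namespace ParentTree

variable {n : ℕ} (T : ParentTree n)

lemma iter_root (k : ℕ) : T.parent^[k] T.root = T.root := by
  induction k with
  | zero => rfl
  | succ k ih => rw [Function.iterate_succ_apply', ih, T.root_fixed]

lemma iter_depth (v : Fin n) : T.parent^[T.depthToRoot v] v = T.root :=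
  Nat.find_spec (T.reaches_root v)

lemma iter_of_depth_le {v : Fin n} {k : ℕ} (h : T.depthToRoot v ≤ k) :
    T.parent^[k] v = T.root := by
  have : k = (k - T.depthToRoot v) + T.depthToRoot v := by omega
  rw [this, Function.iterate_add_apply, T.iter_depth, T.iter_root]

lemma ne_root_of_lt_depth {v : Fin n} {k : ℕ} (h : k < T.depthToRoot v) :
    T.parent^[k] v ≠ T.root :=
  Nat.find_min (T.reaches_root v) h

lemma depth_iterate (v : Fin n) {k : ℕ} (hk : k ≤ T.depthToRoot v) :
    T.depthToRoot (T.parent^[k] v) = T.depthToRoot v - k := by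
  have hspec : T.parent^[T.depthToRoot v - k] (T.parent^[k] v) = T.root := by
    rw [← Function.iterate_add_apply]
    have : T.depthToRoot v - k + k = T.depthToRoot v := by omega
    rw [this]; exact T.iter_depth v
  refine le_antisymm (Nat.find_le hspec) ?_
  by_contra hlt
  push_neg at hlt
  have h2 : T.parent^[T.depthToRoot (T.parent^[k] v) + k] v = T.root := by
    rw [Function.iterate_add_apply]
    exact T.iter_depth _
  exact T.ne_root_of_lt_depth (by omega) h2

lemma depth_lt (v : Fin n) : T.depthToRoot v < n := by
  have hinj : Set.InjOn (fun k => T.parent^[k] v) ↑(Finset.range (T.depthToRoot v + 1)) := by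
    intro i hi j hj hij
    simp only [Finset.coe_range, Set.mem_Iio] at hi hj
    have di := T.depth_iterate v (k := i) (by omega)
    have dj := T.depth_iterate v (k := j) (by omega)
    simp only at hij
    rw [hij, dj] at di
    omega
  have := Finset.card_le_card_of_injOn (fun k => T.parent^[k] v)
    (fun a _ => Finset.mem_univ _) hinj
  simp only [Finset.card_range, Finset.card_univ, Fintype.card_fin] at this
  omega

lemma mem_desc_iff {v x : Fin n} :
    x ∈ T.descFinset v ↔ ∃ k, T.parent^[k] x = v := by
  constructor
  · rintro hx
    simp only [descFinset, Finset.mem_filter, Finset.mem_univ, true_and] at hx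
    obtain ⟨k, _, hk⟩ := hx
    exact ⟨k, hk⟩
  · rintro ⟨k, hk⟩
    simp only [descFinset, Finset.mem_filter, Finset.mem_univ, true_and]
    by_cases h : k ≤ T.depthToRoot x
    · exact ⟨k, Finset.mem_range.2 (by have := T.depth_lt x; omega), hk⟩
    · push_neg at h
      refine ⟨T.depthToRoot x, Finset.mem_range.2 (by have := T.depth_lt x; omega), ?_⟩
      rw [T.iter_depth, ← hk, T.iter_of_depth_le (by omega)]

lemma self_mem_desc (v : Fin n) : v ∈ T.descFinset v :=
  (T.mem_desc_iff).2 ⟨0, rfl⟩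

lemma desc_subset_parent (v : Fin n) : T.descFinset v ⊆ T.descFinset (T.parent v) := by
  intro x hx
  obtain ⟨k, hk⟩ := (T.mem_desc_iff).1 hx
  refine (T.mem_desc_iff).2 ⟨k + 1, ?_⟩
  rw [Function.iterate_succ_apply', hk]

lemma child_ne_root {u v : Fin n} (h : T.IsChild u v) : u ≠ T.root := by
  rintro rfl
  exact h.1 (by rw [← h.2, T.root_fixed])

lemma depth_pos_of_ne_root {v : Fin n} (h : v ≠ T.root) : 0 < T.depthToRoot v := by
  rcases Nat.eq_zero_or_pos (T.depthToRoot v) with h0 | h0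
  · exact absurd (by simpa [h0] using T.iter_depth v) h
  · exact h0

lemma depth_child {u v : Fin n} (h : T.IsChild u v) :
    T.depthToRoot u = T.depthToRoot v + 1 := by
  have hur := T.child_ne_root h
  have h1 : 0 < T.depthToRoot u := T.depth_pos_of_ne_root hur
  have := T.depth_iterate u (k := 1) (by omega)
  simp only [Function.iterate_one, h.2] at this
  omega

lemma desc_disjoint {u w p : Fin n} (hu : T.IsChild u p) (hw : T.IsChild w p)
    (huw : u ≠ w) : Disjoint (T.descFinset u) (T.descFinset w) := by
  rw [Finset.disjoint_left]
  intro x hxu hxw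
  obtain ⟨k, hk⟩ := (T.mem_desc_iff).1 hxu
  obtain ⟨l, hl⟩ := (T.mem_desc_iff).1 hxw
  have hkd : k < T.depthToRoot x := by
    by_contra h
    push_neg at h
    exact T.child_ne_root hu (by rw [← hk, T.iter_of_depth_le h])
  have hld : l < T.depthToRoot x := by
    by_contra h
    push_neg at h
    exact T.child_ne_root hw (by rw [← hl, T.iter_of_depth_le h])
  have du : T.depthToRoot u = T.depthToRoot x - k := by
    rw [← hk]; exact T.depth_iterate x (by omega)
  have dw : T.depthToRoot w = T.depthToRoot x - l := by
    rw [← hl]; exact T.depth_iterate x (by omega)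
  have : T.depthToRoot u = T.depthToRoot w := by
    rw [T.depth_child hu, T.depth_child hw]
  have : k = l := by omega
  exact huw (by rw [← hk, ← hl, this])

end ParentTree

open ParentTree

/-- **Existence of a heavy path decomposition with logarithmic path-tree height.** Any
rooted tree with `n ≥ 2` vertices admits a decomposition into edge-disjoint heavy paths
(given by a heavy-child selection choosing the child with the most vertices in its
subtree) such that the path tree obtained by contracting each heavy path has height at
most `log₂ n`; equivalently, the path from any vertex to the root uses at most `log₂ n`
light (unselected) edges. -/
theorem exists_heavy_path_decomposition (n : ℕ) (hn : 2 ≤ n) (T : ParentTree n) :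
    ∃ heavy : Fin n → Fin n, T.HeavyWFSize heavy ∧
      ∀ v : Fin n,
        ((((Finset.range (T.depthToRoot v)).filter
            (fun k => ¬ T.HeavyEdge heavy (T.parent^[k] v))).card : ℝ))
          ≤ Real.logb 2 n := by
  have H : ∀ v : Fin n, ∃ h : Fin n, (∃ u, T.IsChild u v) →
      T.IsChild h v ∧ ∀ u, T.IsChild u v → (T.descFinset u).card ≤ (T.descFinset h).card := by
    intro v
    by_cases hc : ∃ u, T.IsChild u v
    · obtain ⟨u0, hu0⟩ := hc
      have hne : (Finset.univ.filter (fun u => T.IsChild u v)).Nonempty :=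
        ⟨u0, by simp [hu0]⟩
      obtain ⟨b, hb, hbmax⟩ := Finset.exists_max_image _ (fun u => (T.descFinset u).card) hne
      refine ⟨b, fun _ => ⟨(Finset.mem_filter.1 hb).2, fun u hu => hbmax u (by simp [hu])⟩⟩
    · exact ⟨v, fun h => absurd h hc⟩
  choose heavy hheavy using H
  refine ⟨heavy, hheavy, ?_⟩
  -- main counting lemma
  have key : ∀ d : ℕ, ∀ v : Fin n, T.depthToRoot v = d →
      2 ^ (((Finset.range d).filter
        (fun k => ¬ T.HeavyEdge heavy (T.parent^[k] v))).card) * (T.descFinset v).card ≤ n := by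
    intro d
    induction d with
    | zero =>
      intro v _
      simp only [Finset.range_zero, Finset.filter_empty, Finset.card_empty, pow_zero, one_mul]
      calc (T.descFinset v).card ≤ (Finset.univ : Finset (Fin n)).card :=
            Finset.card_le_card (Finset.subset_univ _)
        _ = n := by simp
    | succ d ih =>
      intro v hv
      have hvr : v ≠ T.root := by
        intro h
        rw [h] at hv
        have : T.depthToRoot T.root = 0 := Nat.find_eq_zero _ |>.2 rfl
        omega
      set p := T.parent v with hp
      have hchild : T.IsChild v p := ⟨fun h => hvr ?_, rfl⟩
      swap
      · -- v = p = parent v implies v = root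
        have : ∀ k, T.parent^[k] v = v := by
          intro k
          induction k with
          | zero => rfl
          | succ k ihk => rw [Function.iterate_succ_apply', ihk, ← hp, ← h]
        obtain ⟨k, hk⟩ := T.reaches_root v
        rw [this k] at hk
        exact hk
      have hdp : T.depthToRoot p = d := by
        have := T.depth_child hchild
        omega
      -- card splitting
      have hsplit : (((Finset.range (d+1)).filter
          (fun k => ¬ T.HeavyEdge heavy (T.parent^[k] v))).card)
          = (((Finset.range d).filter
            (fun k => ¬ T.HeavyEdge heavy (T.parent^[k] p))).card)
            + (if ¬ T.HeavyEdge heavy v then 1 else 0) := by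
        rw [Finset.card_filter, Finset.card_filter, Finset.sum_range_succ']
        rfl
      by_cases hl : T.HeavyEdge heavy v
      · rw [hsplit]
        simp only [hl, not_true_eq_false, if_false, add_zero]
        calc 2 ^ _ * (T.descFinset v).card ≤ 2 ^ _ * (T.descFinset p).card := by
              exact Nat.mul_le_mul_left _ (Finset.card_le_card (T.desc_subset_parent v))
          _ ≤ n := ih p hdp
      · rw [hsplit]
        simp only [hl, not_false_eq_true, if_true]
        have hhp := hheavy p ⟨v, hchild⟩
        have hvh : v ≠ heavy p := by
          intro h
          exact hl ⟨hvr, h.symm⟩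
        have hdisj := T.desc_disjoint hchild hhp.1 hvh
        have hsub : (T.descFinset v) ∪ (T.descFinset (heavy p)) ⊆ T.descFinset p := by
          apply Finset.union_subset
          · exact T.desc_subset_parent v
          · have := T.desc_subset_parent (heavy p)
            rwa [hhp.1.2] at this
        have hcard : 2 * (T.descFinset v).card ≤ (T.descFinset p).card := by
          have h1 := hhp.2 v hchild
          have h2 := Finset.card_union_of_disjoint hdisj
          have h3 := Finset.card_le_card hsub
          omega
        calc 2 ^ (_ + 1) * (T.descFinset v).card
            = 2 ^ _ * (2 * (T.descFinset v).card) := by ring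
          _ ≤ 2 ^ _ * (T.descFinset p).card := Nat.mul_le_mul_left _ hcard
          _ ≤ n := ih p hdp
  intro v
  set L := (((Finset.range (T.depthToRoot v)).filter
    (fun k => ¬ T.HeavyEdge heavy (T.parent^[k] v))).card) with hL
  have h2L : 2 ^ L ≤ n := by
    have := key (T.depthToRoot v) v rfl
    have hcard1 : 1 ≤ (T.descFinset v).card := Finset.card_pos.2 ⟨v, T.self_mem_desc v⟩
    calc 2 ^ L = 2 ^ L * 1 := by ring
      _ ≤ 2 ^ L * (T.descFinset v).card := Nat.mul_le_mul_left _ hcard1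
      _ ≤ n := this
  have hnpos : (0:ℝ) < n := by positivity
  rw [Real.le_logb_iff_rpow_le (by norm_num) hnpos]
  rw [Real.rpow_natCast]
  exact_mod_cast h2L
end
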